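/- Let q be a real-valued Schwartz function on ℝ, let κ, ϰ > 0 with κ ≠ ϰ, and let m, n be Schwartz functions on ℝ whose Fourier transforms are supported in [0,∞) and which solve the gauge equations m' = −iκ m + i C₊(q(m+1)) and n' = −iϰ n + i C₊(q(n+1)). Then: (i) ∫_ℝ q(x) m(x) dx is a real number; (ii) ∫_ℝ m(x) conj(n)(x) dx = ∫_ℝ conj(m)(x) n(x) dx; and (iii) (κ − ϰ) ∫_ℝ conj(m)(x) n(x) dx = ∫_ℝ q(x) n(x) dx − ∫_ℝ q(x) m(x) dx. (With β(κ) = ∫ q m and β(ϰ) = ∫ q n, item (iii) reads ∫ conj(m) n = −(β(κ) − β(ϰ))/(κ − ϰ).) -/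

import Mathlib

/-!
Against a function whose spectrum lies in `[0, ∞)`, the projection `C₊` is invisible: `C₊` is
self-adjoint (both pairings equal `∫_{ξ ≥ 0} conj(f̂) ĝ` by Fubini) and fixes such functions by
Fourier inversion. Pairing the gauge equation for `m` with `n`, and `m` with the one for `n`, the
`C₊` terms therefore become `∫ q conj(m) n + ∫ q n` and `∫ q conj(m) n + ∫ q conj(m)`; the
derivative terms cancel after integrating by parts, leaving
`(κ - ϰ) ∫ conj(m) n = ∫ q n - ∫ q conj(m)`. For `n = m` this says `∫ q conj(m) = ∫ q m`, which is
(i) and turns the identity into (iii); (ii) follows by comparing (iii) with its instance for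
`(n, m)`.
-/

open MeasureTheory Set ComplexConjugate

/-- Fourier transform with the convention `f̂(ξ) = (2π)^{-1/2} ∫ e^{-iξx} f(x) dx`. -/
noncomputable def FT (f : ℝ → ℂ) (ξ : ℝ) : ℂ :=
  (Real.sqrt (2 * Real.pi))⁻¹ * ∫ x : ℝ, Complex.exp (-(Complex.I * ξ * x)) * f x

/-- Cauchy–Szegő projection `C₊`, the Fourier multiplier with symbol `1_{[0,∞)}`. -/
noncomputable def Cplus (f : ℝ → ℂ) (x : ℝ) : ℂ :=
  (Real.sqrt (2 * Real.pi))⁻¹ * ∫ ξ in Ici (0 : ℝ), Complex.exp (Complex.I * ξ * x) * FT f ξ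

/-- The gauge equation `m' = -iκ m + i C₊(q(m+1))`. -/
def SolvesGauge (q : ℝ → ℂ) (κ : ℝ) (m : ℝ → ℂ) : Prop :=
  ∀ x : ℝ, deriv m x = -Complex.I * κ * m x + Complex.I * Cplus (fun y => q y * (m y + 1)) x

open Complex Real FourierTransform SchwartzMap

noncomputable def conjMulCLM : ℂ →L[ℝ] ℂ →L[ℝ] ℂ :=
  (ContinuousLinearMap.mul ℝ ℂ).comp conjCLE.toContinuousLinearMap

@[simp]
lemma conjMulCLM_apply (z w : ℂ) : conjMulCLM z w = conj z * w := rfl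

lemma FT_eq_fourier (f : ℝ → ℂ) (ξ : ℝ) : FT f ξ = (√(2 * π))⁻¹ * 𝓕 f (ξ / (2 * π)) := by
  rw [FT, Real.fourier_real_eq_integral_exp_smul]
  congr 2 with x
  rw [smul_eq_mul]
  congr 2
  push_cast
  field_simp

lemma FT_eq_fourierIntegral (f : ℝ → ℂ) (ξ : ℝ) :
    FT f ξ = (√(2 * π))⁻¹ *
      VectorFourier.fourierIntegral probChar volume (LinearMap.mul ℝ ℝ) f ξ := by
  simp only [FT, VectorFourier.fourierIntegral_probChar, smul_eq_mul, LinearMap.mul_apply']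
  congr 2 with x
  push_cast
  ring_nf

lemma Cplus_eq_fourierIntegral (f : ℝ → ℂ) (x : ℝ) :
    Cplus f x = (√(2 * π))⁻¹ * VectorFourier.fourierIntegral probChar
      (volume.restrict (Ici 0)) (-LinearMap.mul ℝ ℝ) (FT f) x := by
  simp only [Cplus, VectorFourier.fourierIntegral_probChar, smul_eq_mul, LinearMap.neg_apply,
    LinearMap.mul_apply']
  congr 2 with ξ
  push_cast
  ring_nf

lemma integral_conj_Cplus_mul (f g : ℝ → ℂ) (hf : IntegrableOn (FT f) (Ici 0))
    (hg : Integrable g) :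
    ∫ x, conj (Cplus f x) * g x = ∫ ξ in Ici 0, conj (FT f ξ) * FT g ξ := by
  have hL : -(-LinearMap.mul ℝ ℝ).flip = LinearMap.mul ℝ ℝ := by
    ext
    simp
  have h := VectorFourier.integral_sesq_fourierIntegral_eq_neg_flip (innerSL ℂ)
    (L := -LinearMap.mul ℝ ℝ) (ν := volume) continuous_probChar (by fun_prop) hf hg
  simp only [innerSL_apply_apply, RCLike.inner_apply, hL] at h
  simp only [Cplus_eq_fourierIntegral, FT_eq_fourierIntegral g, map_mul, conj_ofReal, mul_assoc,
    integral_const_mul, mul_left_comm _ (((√(2 * π))⁻¹ : ℝ) : ℂ)]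
  simp only [mul_comm] at h ⊢
  rw [h]

namespace SchwartzMap

lemma integrable_FT (f : 𝓢(ℝ, ℂ)) : Integrable (FT f) := by
  simp_rw [funext (FT_eq_fourier f), ← fourier_coe]
  exact ((𝓕 f).integrable.comp_div (by positivity)).const_mul _

lemma integral_conj_mul_Cplus (f g : 𝓢(ℝ, ℂ)) :
    ∫ x, conj (f x) * Cplus g x = ∫ x, conj (Cplus f x) * g x := calc
  _ = conj (∫ x, conj (Cplus g x) * f x) := by
    rw [← integral_conj]
    simp only [map_mul, conj_conj, mul_comm]
  _ = conj (∫ ξ in Ici 0, conj (FT g ξ) * FT f ξ) := by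
    rw [integral_conj_Cplus_mul g f g.integrable_FT.integrableOn f.integrable]
  _ = ∫ ξ in Ici 0, conj (FT f ξ) * FT g ξ := by
    rw [← integral_conj]
    simp only [map_mul, conj_conj, mul_comm]
  _ = _ := (integral_conj_Cplus_mul f g f.integrable_FT.integrableOn g.integrable).symm

lemma Cplus_eq_self (g : 𝓢(ℝ, ℂ)) (hg : ∀ ξ < 0, FT g ξ = 0) : Cplus g = g := by
  ext x
  have hsupp : ∫ ξ in Ici (0 : ℝ), exp (I * ξ * x) * FT g ξ = ∫ ξ : ℝ, exp (I * ξ * x) * FT g ξ :=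
    setIntegral_eq_integral_of_forall_compl_eq_zero fun ξ hξ ↦ by
      rw [hg ξ (not_le.1 hξ), mul_zero]
  have hscale : ∫ ξ : ℝ, exp (I * ξ * x) * FT g ξ
      = (√(2 * π))⁻¹ * (2 * π) * ∫ u : ℝ, exp (2 * π * u * x * I) * 𝓕 (⇑g) u := by
    have h := Measure.integral_comp_div (fun u : ℝ ↦ exp (2 * π * u * x * I) * 𝓕 (⇑g) u) (2 * π)
    rw [abs_of_pos two_pi_pos, real_smul] at h
    push_cast at h
    rw [mul_assoc, ← h, ← integral_const_mul]
    congr 1 with ξ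
    rw [FT_eq_fourier]
    field_simp
  have hinv : ∫ u : ℝ, exp (2 * π * u * x * I) * 𝓕 (⇑g) u = g x := by
    rw [← congrFun (g.continuous.fourierInv_fourier_eq g.integrable (𝓕 g).integrable) x,
      Real.fourierInv_eq']
    congr 1 with u
    simp only [RCLike.inner_apply, conj_trivial, smul_eq_mul]
    push_cast
    ring_nf
  have hnorm : (((√(2 * π))⁻¹ : ℝ) : ℂ) * ((√(2 * π))⁻¹ : ℝ) * (2 * π) = 1 := by
    norm_cast
    rw [← mul_inv, Real.mul_self_sqrt two_pi_pos.le, inv_mul_cancel₀ two_pi_pos.ne']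
  rw [Cplus, hsupp, hscale, hinv, ← mul_assoc, ← mul_assoc, hnorm, one_mul]

lemma integral_conj_Cplus_mul_eq (f g : 𝓢(ℝ, ℂ)) (hg : ∀ ξ < 0, FT g ξ = 0) :
    ∫ x, conj (Cplus f x) * g x = ∫ x, conj (f x) * g x := by
  rw [← integral_conj_mul_Cplus, g.Cplus_eq_self hg]

lemma integral_conj_mul_Cplus_eq (f g : 𝓢(ℝ, ℂ)) (hf : ∀ ξ < 0, FT f ξ = 0) :
    ∫ x, conj (f x) * Cplus g x = ∫ x, conj (f x) * g x := by
  rw [integral_conj_mul_Cplus, f.Cplus_eq_self hf]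

section Integrable

variable {D : Type*} [NormedAddCommGroup D] [NormedSpace ℝ D] [MeasurableSpace D] [BorelSpace D]
  [SecondCountableTopology D] {μ : Measure D} [μ.HasTemperateGrowth]

lemma integrable_mul (f g : 𝓢(D, ℂ)) : Integrable (fun x ↦ f x * g x) μ :=
  (pairing (ContinuousLinearMap.mul ℝ ℂ) f g).integrable

lemma integrable_conj_mul (f g : 𝓢(D, ℂ)) : Integrable (fun x ↦ conj (f x) * g x) μ :=
  (pairing conjMulCLM f g).integrable

end Integrable

lemma integral_conj_deriv_mul_add_integral_conj_mul_deriv (f g : 𝓢(ℝ, ℂ)) :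
    (∫ x, conj (deriv f x) * g x) + ∫ x, conj (f x) * deriv g x = 0 := by
  have h := integral_bilinear_deriv_right_eq_neg_left f g conjMulCLM
  simp only [conjMulCLM_apply] at h
  rw [h, add_neg_cancel]

lemma exists_coe_eq_mul_add_one (q a : 𝓢(ℝ, ℂ)) : ∃ P : 𝓢(ℝ, ℂ), ⇑P = fun y ↦ q y * (a y + 1) :=
  ⟨pairing (ContinuousLinearMap.mul ℝ ℂ) q a + q, by ext; simp [mul_add]⟩

end SchwartzMap

lemma SolvesGauge.Cplus_eq {q m : ℝ → ℂ} {κ : ℝ} (h : SolvesGauge q κ m) :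
    Cplus (fun y ↦ q y * (m y + 1)) = fun x ↦ κ * m x - I * deriv m x := by
  ext x
  linear_combination I * h x + (Cplus (fun y ↦ q y * (m y + 1)) x - κ * m x) * I_sq

theorem SolvesGauge.sub_mul_integral_conj_mul {q a b : 𝓢(ℝ, ℂ)} {κ ϰ : ℝ}
    (hq : ∀ x, conj (q x) = q x) (ha : ∀ ξ < 0, FT a ξ = 0) (hb : ∀ ξ < 0, FT b ξ = 0)
    (hga : SolvesGauge q κ a) (hgb : SolvesGauge q ϰ b) :
    (κ - ϰ : ℂ) * ∫ x, conj (a x) * b x = (∫ x, q x * b x) - ∫ x, conj (a x) * q x := by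
  obtain ⟨Pa, hPa⟩ := exists_coe_eq_mul_add_one q a
  obtain ⟨Pb, hPb⟩ := exists_coe_eq_mul_add_one q b
  have hqb : Integrable fun x ↦ conj (a x) * (q x * b x) :=
    integrable_conj_mul a (pairing (ContinuousLinearMap.mul ℝ ℂ) q b)
  have hA : κ * (∫ x, conj (a x) * b x) + I * ∫ x, conj (deriv a x) * b x
      = (∫ x, conj (a x) * (q x * b x)) + ∫ x, q x * b x := calc
    _ = ∫ x, conj (Cplus Pa x) * b x := by
      rw [← integral_const_mul, ← integral_const_mul, ← integral_add, hPa, hga.Cplus_eq]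
      · congr 1 with x
        simp only [map_sub, map_mul, conj_ofReal, conj_I]
        ring
      · exact (integrable_conj_mul a b).const_mul _
      · exact (integrable_conj_mul (derivCLM ℝ ℂ a) b).const_mul _
    _ = ∫ x, conj (Pa x) * b x := integral_conj_Cplus_mul_eq Pa b hb
    _ = _ := by
      rw [← integral_add hqb (integrable_mul q b), hPa]
      congr 1 with x
      simp only [map_mul, map_add, map_one, hq]
      ring
  have hB : ϰ * (∫ x, conj (a x) * b x) - I * ∫ x, conj (a x) * deriv b x
      = (∫ x, conj (a x) * (q x * b x)) + ∫ x, conj (a x) * q x := calc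
    _ = ∫ x, conj (a x) * Cplus Pb x := by
      rw [← integral_const_mul, ← integral_const_mul, ← integral_sub, hPb, hgb.Cplus_eq]
      · congr 1 with x
        ring
      · exact (integrable_conj_mul a b).const_mul _
      · exact (integrable_conj_mul a (derivCLM ℝ ℂ b)).const_mul _
    _ = ∫ x, conj (a x) * Pb x := integral_conj_mul_Cplus_eq a Pb ha
    _ = _ := by
      rw [← integral_add hqb (integrable_conj_mul a q), hPb]
      congr 1 with x
      ring
  linear_combination hA - hB - I * integral_conj_deriv_mul_add_integral_conj_mul_deriv a b

theorem SolvesGauge.integral_conj_mul_eq_integral_mul {q a : 𝓢(ℝ, ℂ)} {κ : ℝ}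
    (hq : ∀ x, conj (q x) = q x) (ha : ∀ ξ < 0, FT a ξ = 0) (hga : SolvesGauge q κ a) :
    ∫ x, conj (a x) * q x = ∫ x, q x * a x := by
  have h := hga.sub_mul_integral_conj_mul hq ha ha hga
  rw [sub_self, zero_mul, eq_comm, sub_eq_zero] at h
  exact h.symm

theorem stmt11_general (q m n : SchwartzMap ℝ ℂ) (κ ϰ : ℝ) (hne : κ ≠ ϰ)
    (hq : ∀ x : ℝ, (q x).im = 0)
    (hm : ∀ ξ : ℝ, ξ < 0 → FT (⇑m) ξ = 0) (hn : ∀ ξ : ℝ, ξ < 0 → FT (⇑n) ξ = 0)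
    (hgm : SolvesGauge (⇑q) κ (⇑m)) (hgn : SolvesGauge (⇑q) ϰ (⇑n)) :
    (∫ x : ℝ, q x * m x).im = 0 ∧
      (∫ x : ℝ, m x * conj (n x)) = (∫ x : ℝ, conj (m x) * n x) ∧
      ((κ : ℂ) - (ϰ : ℂ)) * (∫ x : ℝ, conj (m x) * n x)
        = (∫ x : ℝ, q x * n x) - (∫ x : ℝ, q x * m x) := by
  have hq_conj : ∀ x, conj (q x) = q x := fun x ↦ conj_eq_iff_im.2 (hq x)
  have hβm := hgm.integral_conj_mul_eq_integral_mul hq_conj hm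
  have hβn := hgn.integral_conj_mul_eq_integral_mul hq_conj hn
  have hmn := hgm.sub_mul_integral_conj_mul hq_conj hm hn hgn
  have hnm := hgn.sub_mul_integral_conj_mul hq_conj hn hm hgm
  rw [hβm] at hmn
  rw [hβn] at hnm
  refine ⟨?_, ?_, hmn⟩
  · rw [← conj_eq_iff_im, ← integral_conj, ← hβm]
    simp only [map_mul, hq_conj, mul_comm]
  · have hκϰ : (κ - ϰ : ℂ) ≠ 0 := sub_ne_zero.2 (ofReal_injective.ne hne)
    simp only [mul_comm (m _)]
    exact mul_left_cancel₀ hκϰ (by linear_combination -hnm - hmn)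

/-- With `β(κ) = ∫ q m` and `β(ϰ) = ∫ q n`:
(i) `∫ q m` is real; (ii) `∫ m conj n = ∫ conj m n`; and
(iii) `(κ - ϰ) ∫ conj m · n = ∫ q n - ∫ q m`, i.e. `∫ conj m · n = -(β(κ)-β(ϰ))/(κ-ϰ)`. -/
theorem stmt11 (q m n : SchwartzMap ℝ ℂ) (κ ϰ : ℝ) (hκ : 0 < κ) (hϰ : 0 < ϰ) (hne : κ ≠ ϰ)
    (hq : ∀ x : ℝ, (q x).im = 0)
    (hm : ∀ ξ : ℝ, ξ < 0 → FT (⇑m) ξ = 0) (hn : ∀ ξ : ℝ, ξ < 0 → FT (⇑n) ξ = 0)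
    (hgm : SolvesGauge (⇑q) κ (⇑m)) (hgn : SolvesGauge (⇑q) ϰ (⇑n)) :
    (∫ x : ℝ, q x * m x).im = 0 ∧
      (∫ x : ℝ, m x * conj (n x)) = (∫ x : ℝ, conj (m x) * n x) ∧
      ((κ : ℂ) - (ϰ : ℂ)) * (∫ x : ℝ, conj (m x) * n x)
        = (∫ x : ℝ, q x * n x) - (∫ x : ℝ, q x * m x) :=
  stmt11_general q m n κ ϰ hne hq hm hn hgm hgn
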